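/- For any origin-symmetric convex body K in ℝⁿ and any t > 0, N(K, t·B) ≤ N(K, 2t·B) · N(B, (t/8)·K*), where B is the Euclidean unit ball and K* is the polar body of K. -/
import Mathlib


open Pointwise RealInnerProductSpace

/-- The translative covering number `N(K, L)`. -/
noncomputable def covN {n : ℕ} (K L : Set (EuclideanSpace ℝ (Fin n))) : ℕ∞ :=
  sInf {m : ℕ∞ | ∃ X : Finset (EuclideanSpace ℝ (Fin n)),
    (X.card : ℕ∞) = m ∧ K ⊆ ⋃ x ∈ X, (x +ᵥ L)}

/-- The polar body `K* = {x : ⟨x,k⟩ ≤ 1 for all k ∈ K}`. -/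
def polarBody {n : ℕ} (K : Set (EuclideanSpace ℝ (Fin n))) : Set (EuclideanSpace ℝ (Fin n)) :=
  {x | ∀ k ∈ K, ⟪x, k⟫ ≤ 1}

lemma covN_ne_zero {n : ℕ} {A L : Set (EuclideanSpace ℝ (Fin n))} (hA : A.Nonempty) :
    covN A L ≠ 0 := by
  intro h0
  set S := {m : ℕ∞ | ∃ X : Finset (EuclideanSpace ℝ (Fin n)),
    (X.card : ℕ∞) = m ∧ A ⊆ ⋃ x ∈ X, (x +ᵥ L)} with hS
  rcases Set.eq_empty_or_nonempty S with he | hne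
  · have : covN A L = ⊤ := by rw [covN, ← hS, he, sInf_empty]
    simp [this] at h0
  · have hmem : covN A L ∈ S := csInf_mem hne
    rw [h0] at hmem
    obtain ⟨X, hcard, hcov⟩ := hmem
    have : X = ∅ := by
      have : X.card = 0 := by exact_mod_cast hcard
      exact Finset.card_eq_zero.mp this
    subst this
    obtain ⟨a, ha⟩ := hA
    simpa using hcov ha

lemma key_lemma {n : ℕ} {K : Set (EuclideanSpace ℝ (Fin n))} (hsym : K = -K)
    {t : ℝ} (ht : 0 < t) {c z z' : EuclideanSpace ℝ (Fin n)}
    (hz : z ∈ K) (hz' : z' ∈ K)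
    (hu : z - c ∈ (t^2/4) • polarBody K) (hu' : z' - c ∈ (t^2/4) • polarBody K) :
    ‖z - z'‖ ≤ t := by
  obtain ⟨u, hu, huu⟩ := hu
  obtain ⟨u', hu', huu'⟩ := hu'
  have huu : (t^2/4) • u = z - c := huu
  have huu' : (t^2/4) • u' = z' - c := huu'
  have hnz : -z ∈ K := by rw [hsym]; simpa using hz
  have hnz' : -z' ∈ K := by rw [hsym]; simpa using hz'
  have h1 : ⟪u, z⟫ ≤ 1 := hu z hz
  have h2 : ⟪u, -z'⟫ ≤ 1 := hu _ hnz'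
  have h3 : ⟪u', -z⟫ ≤ 1 := hu' _ hnz
  have h4 : ⟪u', z'⟫ ≤ 1 := hu' _ hz'
  have hw : z - z' = (t^2/4) • u - (t^2/4) • u' := by
    rw [huu, huu']; abel
  have hsq : ‖z - z'‖^2 ≤ t^2 := by
    have : ‖z - z'‖^2 = ⟪z - z', z - z'⟫ := (real_inner_self_eq_norm_sq _).symm
    rw [this]
    nth_rewrite 1 [hw]
    rw [inner_sub_left, real_inner_smul_left, real_inner_smul_left,
      inner_sub_right, inner_sub_right]
    have e2 : ⟪u, z'⟫ = -⟪u, -z'⟫ := by rw [inner_neg_right]; ring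
    have e3 : ⟪u', z⟫ = -⟪u', -z⟫ := by rw [inner_neg_right]; ring
    rw [e2, e3]
    nlinarith
  nlinarith [norm_nonneg (z - z')]

lemma covN_le_of_covers {n : ℕ} {K : Set (EuclideanSpace ℝ (Fin n))} (hsym : K = -K)
    {t : ℝ} (ht : 0 < t) (X Y : Finset (EuclideanSpace ℝ (Fin n)))
    (hX : K ⊆ ⋃ x ∈ X, (x +ᵥ (2 * t) • Metric.closedBall (0 : EuclideanSpace ℝ (Fin n)) 1))
    (hY : Metric.closedBall (0 : EuclideanSpace ℝ (Fin n)) 1 ⊆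
      ⋃ y ∈ Y, (y +ᵥ (t / 8) • polarBody K)) :
    covN K (t • Metric.closedBall (0 : EuclideanSpace ℝ (Fin n)) 1) ≤
      (X.card : ℕ∞) * (Y.card : ℕ∞) := by
  classical
  have h2t : (2 * t) ≠ 0 := by positivity
  -- the picking function
  set g : (EuclideanSpace ℝ (Fin n)) → (EuclideanSpace ℝ (Fin n)) → (EuclideanSpace ℝ (Fin n)) := fun x y =>
    if h : (K ∩ ((x + (2 * t) • y) +ᵥ ((t^2/4) • polarBody K))).Nonempty
    then h.choose else 0 with hg
  set Z : Finset (EuclideanSpace ℝ (Fin n)) := (X ×ˢ Y).image (fun p => g p.1 p.2) with hZ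
  have hcov : K ⊆ ⋃ z ∈ Z, (z +ᵥ t • Metric.closedBall (0 : (EuclideanSpace ℝ (Fin n))) 1) := by
    intro z hz
    obtain ⟨_, ⟨x, rfl⟩, _, ⟨hx, rfl⟩, hzx⟩ := hX hz
    rw [Set.mem_vadd_set_iff_neg_vadd_mem] at hzx
    obtain ⟨b, hb, hbe⟩ := hzx
    -- -x +ᵥ z = (2t) • b, b ∈ B
    have hbB : (2 * t)⁻¹ • (-x +ᵥ z) ∈ Metric.closedBall (0 : (EuclideanSpace ℝ (Fin n))) 1 := by
      rw [← hbe, inv_smul_smul₀ h2t]; exact hb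
    obtain ⟨_, ⟨y, rfl⟩, _, ⟨hy, rfl⟩, hzy⟩ := hY hbB
    rw [Set.mem_vadd_set_iff_neg_vadd_mem] at hzy
    obtain ⟨p, hp, hpe⟩ := hzy
    -- show z - (x + 2t•y) ∈ (t²/4)•P
    have hmem : z - (x + (2 * t) • y) ∈ (t^2/4) • polarBody K := by
      refine ⟨p, hp, ?_⟩
      have hpe' : (t/8) • p = -y + (2*t)⁻¹ • (-x + z) := by
        simpa [vadd_eq_add] using hpe
      show (t^2/4) • p = z - (x + (2*t) • y)
      have h24 : (t^2/4) • p = (2*t) • ((t/8) • p) := by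
        rw [smul_smul]; congr 1; ring
      rw [h24, hpe', smul_add, smul_neg, smul_inv_smul₀ h2t]
      abel
    set c : (EuclideanSpace ℝ (Fin n)) := x + (2 * t) • y with hc
    have hne : (K ∩ (c +ᵥ ((t^2/4) • polarBody K))).Nonempty := by
      refine ⟨z, hz, ?_⟩
      rw [Set.mem_vadd_set_iff_neg_vadd_mem]
      simpa [sub_eq_neg_add] using hmem
    have hgmem : g x y ∈ K ∩ (c +ᵥ ((t^2/4) • polarBody K)) := by
      rw [hg]; simp only [← hc]; rw [dif_pos hne]; exact hne.choose_spec
    have hgK : g x y ∈ K := hgmem.1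
    have hgP : g x y - c ∈ (t^2/4) • polarBody K := by
      have := hgmem.2
      rw [Set.mem_vadd_set_iff_neg_vadd_mem] at this
      simpa [sub_eq_neg_add] using this
    have hmem' : z - c ∈ (t^2/4) • polarBody K := hmem
    have hdist : ‖z - g x y‖ ≤ t := key_lemma hsym ht hz hgK hmem' hgP
    have hZmem : g x y ∈ Z := Finset.mem_image.mpr ⟨(x, y), Finset.mem_product.mpr ⟨hx, hy⟩, rfl⟩
    refine Set.mem_biUnion hZmem ?_
    rw [Set.mem_vadd_set_iff_neg_vadd_mem]
    refine ⟨t⁻¹ • (z - g x y), ?_, ?_⟩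
    · rw [Metric.mem_closedBall, dist_zero_right, norm_smul, norm_inv, Real.norm_of_nonneg ht.le]
      rw [inv_mul_le_iff₀ ht, mul_one]
      exact hdist
    · show t • (t⁻¹ • (z - g x y)) = -g x y +ᵥ z
      rw [smul_inv_smul₀ ht.ne']
      simp [vadd_eq_add, sub_eq_neg_add]
  calc covN K (t • Metric.closedBall (0 : (EuclideanSpace ℝ (Fin n))) 1) ≤ (Z.card : ℕ∞) := sInf_le ⟨Z, rfl, hcov⟩
    _ ≤ ((X.card * Y.card : ℕ) : ℕ∞) := by
        exact_mod_cast Nat.cast_le.mpr (Finset.card_image_le.trans_eq (Finset.card_product X Y))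
    _ = (X.card : ℕ∞) * (Y.card : ℕ∞) := by push_cast; ring

/-- Tomczak–Jaegermann's lemma: for an origin-symmetric convex body `K` and `t > 0`,
`N(K, tB) ≤ N(K, 2tB) ⬝ N(B, (t/8)K*)`, where `B` is the Euclidean unit ball. -/
theorem covN_ball_polar {n : ℕ} (K : Set (EuclideanSpace ℝ (Fin n)))
    (hK : IsCompact K) (hKc : Convex ℝ K) (hKi : (interior K).Nonempty)
    (hsym : K = -K) (t : ℝ) (ht : 0 < t) :
    covN K (t • Metric.closedBall (0 : EuclideanSpace ℝ (Fin n)) 1) ≤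
      covN K ((2 * t) • Metric.closedBall (0 : EuclideanSpace ℝ (Fin n)) 1) *
      covN (Metric.closedBall (0 : EuclideanSpace ℝ (Fin n)) 1) ((t / 8) • polarBody K) := by
  classical
  have hKne : K.Nonempty := hKi.mono interior_subset
  have hBne : (Metric.closedBall (0 : (EuclideanSpace ℝ (Fin n))) 1).Nonempty := ⟨0, by simp⟩
  set S1 := {m : ℕ∞ | ∃ X : Finset (EuclideanSpace ℝ (Fin n)), (X.card : ℕ∞) = m ∧
    K ⊆ ⋃ x ∈ X, (x +ᵥ (2 * t) • Metric.closedBall (0 : (EuclideanSpace ℝ (Fin n))) 1)} with hS1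
  set S2 := {m : ℕ∞ | ∃ X : Finset (EuclideanSpace ℝ (Fin n)), (X.card : ℕ∞) = m ∧
    Metric.closedBall (0 : (EuclideanSpace ℝ (Fin n))) 1 ⊆ ⋃ x ∈ X, (x +ᵥ (t / 8) • polarBody K)} with hS2
  rcases Set.eq_empty_or_nonempty S1 with he1 | hne1
  · have : covN K ((2 * t) • Metric.closedBall (0 : (EuclideanSpace ℝ (Fin n))) 1) = ⊤ := by
      rw [covN, ← hS1, he1, sInf_empty]
    rw [this, ENat.top_mul (covN_ne_zero hBne)]
    exact le_top
  rcases Set.eq_empty_or_nonempty S2 with he2 | hne2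
  · have : covN (Metric.closedBall (0 : (EuclideanSpace ℝ (Fin n))) 1) ((t / 8) • polarBody K) = ⊤ := by
      rw [covN, ← hS2, he2, sInf_empty]
    rw [this, ENat.mul_top (covN_ne_zero hKne)]
    exact le_top
  have h1 : covN K ((2 * t) • Metric.closedBall (0 : (EuclideanSpace ℝ (Fin n))) 1) ∈ S1 := csInf_mem hne1
  have h2 : covN (Metric.closedBall (0 : (EuclideanSpace ℝ (Fin n))) 1) ((t / 8) • polarBody K) ∈ S2 := csInf_mem hne2
  obtain ⟨X, hXcard, hXcov⟩ := h1
  obtain ⟨Y, hYcard, hYcov⟩ := h2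
  rw [← hXcard, ← hYcard]
  exact covN_le_of_covers hsym ht X Y hXcov hYcov
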